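/- Let N ∈ ℕ and let S be the (N+1)×(N+1) matrix (indices 0,…,N) with S_{i,i−1} = i/2 for 1 ≤ i ≤ N, S_{i,i+1} = (N−i)/2 for 0 ≤ i ≤ N−1, and all other entries zero. (1) If j ∈ {0,…,N} and v ∈ ℂ^{N+1} satisfies Sv = (N/2 − j)v, then the function F_j(y) := (√y)^{j}(√(1−y))^{N−j} v satisfies y(1−y)F_j'(y) + (1/2)(S − (N/2)I + NyI)F_j(y) = 0 for all y ∈ (0,1). (2) If v₀,…,v_N are nonzero vectors with Sv_j = (N/2 − j)v_j for each j, then the functions F₀,…,F_N form a basis of the space of solutions on (0,1) of the system y(1−y)F'(y) + (1/2)(S − (N/2)I + NyI)F(y) = 0: they are linearly independent and every solution is a linear combination of them. -/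

import Mathlib

/-!
In an eigenbasis of `S` the system decouples: the `j`-th coordinate `g` of a solution satisfies
the scalar equation `y(1-y) g' = ½(j - Ny) g`, whose solutions on `(0,1)` are the constant
multiples of the nowhere-vanishing function `√y^j √(1-y)^(N-j)` (the quotient has zero
derivative). Linear independence of the `F_j` is that of the eigenvectors, evaluated at `y = 1/2`.
-/

open Matrix Set

/-- Entrywise derivative of a vector-valued function on `ℝ`. -/
noncomputable def vderiv {n : ℕ} (F : ℝ → (Fin n → ℂ)) : ℝ → (Fin n → ℂ) :=
  fun y i => deriv (fun t => F t i) y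

/-- The tridiagonal matrix `S` with `S_{i,i−1} = i/2`, `S_{i,i+1} = (N−i)/2`. -/
noncomputable def Smat (N : ℕ) : Matrix (Fin (N + 1)) (Fin (N + 1)) ℂ :=
  Matrix.of fun (i j : Fin (N + 1)) =>
    if (j : ℕ) + 1 = (i : ℕ) then ((i : ℕ) : ℂ) / 2
    else if (i : ℕ) + 1 = (j : ℕ) then ((N : ℂ) - ((i : ℕ) : ℂ)) / 2
    else 0

/-- The solution `F_j(y) = (√y)^j (√(1−y))^{N−j} v`. -/
noncomputable def Fsol (N j : ℕ) (v : Fin (N + 1) → ℂ) (y : ℝ) : Fin (N + 1) → ℂ :=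
  (((Real.sqrt y ^ j * Real.sqrt (1 - y) ^ (N - j) : ℝ)) : ℂ) • v

theorem eqOn_const_mul_of_hasDerivAt_eq_mul {s : Set ℝ} (hs : IsOpen s) (hsc : IsPreconnected s)
    {a g φ : ℝ → ℂ} {x₀ : ℝ} (hx₀ : x₀ ∈ s)
    (hg : ∀ y ∈ s, HasDerivAt g (a y * g y) y) (hφ : ∀ y ∈ s, HasDerivAt φ (a y * φ y) y)
    (hφ₀ : ∀ y ∈ s, φ y ≠ 0) :
    ∀ y ∈ s, g y = g x₀ / φ x₀ * φ y := by
  have hquot : ∀ y ∈ s, HasDerivAt (g / φ) 0 y := fun y hy =>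
    ((hg y hy).div (hφ y hy) (hφ₀ y hy)).congr_deriv (by ring)
  intro y hy
  have hconst : g y / φ y = g x₀ / φ x₀ := hs.is_const_of_deriv_eq_zero hsc
    (fun t ht => (hquot t ht).differentiableAt.differentiableWithinAt)
    (fun t ht => (hquot t ht).deriv) hy hx₀
  rw [← hconst, div_mul_cancel₀ _ (hφ₀ y hy)]

theorem Module.Basis.repr_apply_of_forall_apply_eq_smul {ι R M : Type*} [CommRing R]
    [AddCommGroup M] [Module R M] (b : Module.Basis ι R M) (f : M →ₗ[R] M) (μ : ι → R)
    (hf : ∀ i, f (b i) = μ i • b i) (w : M) (i : ι) :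
    b.repr (f w) i = μ i * b.repr w i := by
  have hcomp : (b.coord i).comp f = μ i • b.coord i := b.ext fun k => by
    classical
    by_cases hki : k = i
    · subst hki; simp [hf]
    · simp [hf, hki]
  exact LinearMap.congr_fun hcomp w

theorem hasDerivAt_vderiv {n : ℕ} {G : ℝ → Fin n → ℂ} {y : ℝ}
    (hG : ∀ i, DifferentiableAt ℝ (fun t => G t i) y) : HasDerivAt G (vderiv G y) y :=
  hasDerivAt_pi.2 fun i => (hG i).hasDerivAt

theorem vderiv_eq_of_hasDerivAt {n : ℕ} {G : ℝ → Fin n → ℂ} {G' : Fin n → ℂ} {y : ℝ}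
    (hG : HasDerivAt G G' y) : vderiv G y = G' :=
  funext fun i => (hasDerivAt_pi.1 hG i).deriv

theorem hasDerivAt_sqrt_pow {x : ℝ} (hx : 0 < x) (j : ℕ) :
    HasDerivAt (fun t => √t ^ j) (j / (2 * x) * √x ^ j) x := by
  refine ((Real.hasDerivAt_sqrt hx.ne').pow j).congr_deriv ?_
  rcases j with _ | k
  · simp
  · have hsq : √x * √x = x := Real.mul_self_sqrt hx.le
    have hs : √x ≠ 0 := (Real.sqrt_pos.2 hx).ne'
    rw [pow_succ, Nat.add_sub_cancel]
    field_simp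
    linear_combination -hsq

theorem mulVec_sub_smul_one_add_smul_one {n : ℕ} (A : Matrix (Fin n) (Fin n) ℂ) (a b : ℂ)
    (w : Fin n → ℂ) : (A - a • 1 + b • 1) *ᵥ w = A *ᵥ w + (b - a) • w := by
  rw [add_mulVec, sub_mulVec, smul_mulVec, smul_mulVec, one_mulVec]
  module

theorem ofReal_ne_zero_of_mem_Ioo {y : ℝ} (hy : y ∈ Ioo (0 : ℝ) 1) : (y : ℂ) ≠ 0 :=
  Complex.ofReal_ne_zero.2 hy.1.ne'

theorem one_sub_ofReal_ne_zero_of_mem_Ioo {y : ℝ} (hy : y ∈ Ioo (0 : ℝ) 1) :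
    1 - (y : ℂ) ≠ 0 :=
  sub_ne_zero.2 (Complex.ofReal_ne_one.2 hy.2.ne).symm

noncomputable def solWeight (N j : ℕ) (y : ℝ) : ℂ :=
  ((√y ^ j * √(1 - y) ^ (N - j) : ℝ) : ℂ)

theorem Fsol_eq_solWeight_smul (N j : ℕ) (v : Fin (N + 1) → ℂ) :
    Fsol N j v = fun y => solWeight N j y • v :=
  rfl

theorem solWeight_ne_zero (N j : ℕ) {y : ℝ} (hy : y ∈ Ioo (0 : ℝ) 1) :
    solWeight N j y ≠ 0 := by
  have h₀ : √y ≠ 0 := Real.sqrt_ne_zero'.2 hy.1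
  have h₁ : √(1 - y) ≠ 0 := Real.sqrt_ne_zero'.2 (by linarith [hy.2])
  exact Complex.ofReal_ne_zero.2 (mul_ne_zero (pow_ne_zero _ h₀) (pow_ne_zero _ h₁))

/-- The scalar equation `y(1-y) g' + ½(Ny - j) g = 0` reads `g' = odeRate N j y * g`. -/
noncomputable def odeRate (N j : ℕ) (y : ℝ) : ℂ :=
  (j - N * y) / (2 * y * (1 - y))

theorem mul_odeRate (N j : ℕ) {y : ℝ} (hy : y ∈ Ioo (0 : ℝ) 1) :
    (y : ℂ) * (1 - y) * odeRate N j y = (j - N * y) / 2 := by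
  have := ofReal_ne_zero_of_mem_Ioo hy
  have := one_sub_ofReal_ne_zero_of_mem_Ioo hy
  unfold odeRate
  field_simp

theorem hasDerivAt_solWeight {N j : ℕ} (hj : j ≤ N) {y : ℝ} (hy : y ∈ Ioo (0 : ℝ) 1) :
    HasDerivAt (solWeight N j) (odeRate N j y * solWeight N j y) y := by
  have h₁ : 0 < 1 - y := by linarith [hy.2]
  have hsqrt_one_sub := (hasDerivAt_sqrt_pow h₁ (N - j)).comp y ((hasDerivAt_id y).const_sub 1)
  have hreal := (hasDerivAt_sqrt_pow hy.1 j).mul hsqrt_one_sub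
  refine hreal.ofReal_comp.congr_deriv ?_
  have := ofReal_ne_zero_of_mem_Ioo hy
  have := one_sub_ofReal_ne_zero_of_mem_Ioo hy
  unfold odeRate solWeight
  simp only [Function.comp_apply]
  push_cast [Nat.cast_sub hj]
  field_simp
  ring

section Solutions

variable {N : ℕ} (A : Matrix (Fin (N + 1)) (Fin (N + 1)) ℂ)

noncomputable def odeLHS (G : ℝ → Fin (N + 1) → ℂ) (y : ℝ) : Fin (N + 1) → ℂ :=
  ((y : ℂ) * (1 - (y : ℂ))) • vderiv G y
    + (1 / 2 : ℂ) • ((A - ((N : ℂ) / 2) • (1 : Matrix (Fin (N + 1)) (Fin (N + 1)) ℂ)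
      + ((N : ℂ) * (y : ℂ)) • (1 : Matrix (Fin (N + 1)) (Fin (N + 1)) ℂ)) *ᵥ G y)

theorem odeLHS_Fsol {j : ℕ} (hj : j ≤ N) {v : Fin (N + 1) → ℂ}
    (hv : A *ᵥ v = ((N : ℂ) / 2 - j) • v) {y : ℝ} (hy : y ∈ Ioo (0 : ℝ) 1) :
    odeLHS A (Fsol N j v) y = 0 := by
  have hderiv := (hasDerivAt_solWeight hj hy).smul_const v
  rw [odeLHS, Fsol_eq_solWeight_smul, vderiv_eq_of_hasDerivAt hderiv, mulVec_smul,
    mulVec_sub_smul_one_add_smul_one, hv, smul_smul, ← mul_assoc, mul_odeRate N j hy]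
  module

variable {A} (b : Module.Basis (Fin (N + 1)) ℂ (Fin (N + 1) → ℂ))

theorem hasDerivAt_basis_repr_of_odeLHS_eq_zero
    (hb : ∀ i : Fin (N + 1), A *ᵥ b i = ((N : ℂ) / 2 - (i : ℕ)) • b i)
    {G : ℝ → Fin (N + 1) → ℂ} {y : ℝ}
    (hy : y ∈ Ioo (0 : ℝ) 1) (hG : ∀ i, DifferentiableAt ℝ (fun t => G t i) y)
    (hode : odeLHS A G y = 0) (i : Fin (N + 1)) :
    HasDerivAt (fun t => b.repr (G t) i) (odeRate N i y * b.repr (G y) i) y := by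
  have hcoord : HasDerivAt (fun t => b.repr (G t) i) (b.repr (vderiv G y) i) y :=
    ((b.coord i).toContinuousLinearMap.restrictScalars ℝ).hasFDerivAt.comp_hasDerivAt y
      (hasDerivAt_vderiv hG)
  refine hcoord.congr_deriv ?_
  have heig : b.repr (A *ᵥ G y) i = ((N : ℂ) / 2 - (i : ℕ)) * b.repr (G y) i :=
    b.repr_apply_of_forall_apply_eq_smul A.mulVecLin _ hb (G y) i
  have hproj := congrArg (fun w => b.repr w i) hode
  simp only [odeLHS, mulVec_sub_smul_one_add_smul_one, map_add, map_smul, Finsupp.add_apply,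
    Finsupp.smul_apply, smul_eq_mul, map_zero, Finsupp.coe_zero, Pi.zero_apply, heig] at hproj
  refine mul_left_cancel₀ (mul_ne_zero (ofReal_ne_zero_of_mem_Ioo hy)
    (one_sub_ofReal_ne_zero_of_mem_Ioo hy)) ?_
  rw [← mul_assoc, mul_odeRate N i hy]
  linear_combination hproj

theorem eq_sum_Fsol_of_odeLHS_eq_zero
    (hb : ∀ i : Fin (N + 1), A *ᵥ b i = ((N : ℂ) / 2 - (i : ℕ)) • b i)
    {G : ℝ → Fin (N + 1) → ℂ}
    (hG : ∀ i, ∀ y ∈ Ioo (0 : ℝ) 1, DifferentiableAt ℝ (fun t => G t i) y)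
    (hode : ∀ y ∈ Ioo (0 : ℝ) 1, odeLHS A G y = 0) :
    ∀ y ∈ Ioo (0 : ℝ) 1, G y = ∑ j : Fin (N + 1),
      (b.repr (G (1 / 2)) j / solWeight N j (1 / 2)) • Fsol N j (b j) y := by
  have hhalf : (1 / 2 : ℝ) ∈ Ioo (0 : ℝ) 1 := by norm_num
  intro y hy
  conv_lhs => rw [← b.sum_repr (G y)]
  refine Finset.sum_congr rfl fun j _ => ?_
  rw [Fsol_eq_solWeight_smul, smul_smul]
  congr 1
  exact eqOn_const_mul_of_hasDerivAt_eq_mul isOpen_Ioo isPreconnected_Ioo hhalf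
    (fun t ht => hasDerivAt_basis_repr_of_odeLHS_eq_zero b hb ht (fun i => hG i t ht) (hode t ht) j)
    (fun t ht => hasDerivAt_solWeight (Fin.is_le j) ht) (fun t ht => solWeight_ne_zero N j ht) y hy

end Solutions

theorem eq_zero_of_sum_Fsol_eq_zero {N : ℕ} {v : Fin (N + 1) → Fin (N + 1) → ℂ}
    (hv : LinearIndependent ℂ v) {c : Fin (N + 1) → ℂ}
    (hc : ∀ y ∈ Ioo (0 : ℝ) 1, ∑ j : Fin (N + 1), c j • Fsol N j (v j) y = 0)
    (j : Fin (N + 1)) :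
    c j = 0 := by
  have hhalf : (1 / 2 : ℝ) ∈ Ioo (0 : ℝ) 1 := by norm_num
  have hsum : ∑ k : Fin (N + 1), (c k * solWeight N k (1 / 2)) • v k = 0 := by
    simpa only [Fsol_eq_solWeight_smul, smul_smul] using hc _ hhalf
  exact (mul_eq_zero.1 (Fintype.linearIndependent_iff.1 hv _ hsum j)).resolve_right
    (solWeight_ne_zero N j hhalf)

theorem linearIndependent_of_mulVec_eq_smul {N : ℕ} {A : Matrix (Fin (N + 1)) (Fin (N + 1)) ℂ}
    {v : Fin (N + 1) → Fin (N + 1) → ℂ} (hv₀ : ∀ j, v j ≠ 0)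
    (hv : ∀ j : Fin (N + 1), A *ᵥ v j = ((N : ℂ) / 2 - (j : ℕ)) • v j) :
    LinearIndependent ℂ v :=
  Module.End.eigenvectors_linearIndependent' A.mulVecLin
    (fun j : Fin (N + 1) => (N : ℂ) / 2 - (j : ℕ))
    (fun _ _ hij => Fin.ext (Nat.cast_injective (sub_right_injective hij))) v
    fun j => ⟨Module.End.mem_eigenspace_iff.2 (hv j), hv₀ j⟩

/-- Proposition A.2 of the paper: (1) for an eigenvector `v` of `S`
with eigenvalue `N/2 − j`, the function `F_j(y) = (√y)^j(√(1−y))^{N−j}v` solves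
`y(1−y)F' + ½(S − (N/2)I + NyI)F = 0` on `(0,1)`; (2) for a family of nonzero
eigenvectors `v_j`, the `F_j` are linearly independent and span the solution space. -/
theorem stmt18 (N : ℕ) :
    -- (1)
    (∀ j : ℕ, j ≤ N → ∀ v : Fin (N + 1) → ℂ,
      (Smat N).mulVec v = ((N : ℂ) / 2 - (j : ℂ)) • v →
      ∀ y ∈ Set.Ioo (0:ℝ) 1,
        ((y : ℂ) * (1 - (y : ℂ))) • vderiv (Fsol N j v) y
          + (1 / 2 : ℂ) • ((Smat N - ((N : ℂ) / 2) • (1 : Matrix (Fin (N + 1)) (Fin (N + 1)) ℂ)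
              + ((N : ℂ) * (y : ℂ)) • (1 : Matrix (Fin (N + 1)) (Fin (N + 1)) ℂ)).mulVec
                (Fsol N j v y))
          = 0)
    -- (2)
    ∧ (∀ v : Fin (N + 1) → (Fin (N + 1) → ℂ),
        (∀ j : Fin (N + 1), v j ≠ 0) →
        (∀ j : Fin (N + 1), (Smat N).mulVec (v j) = ((N : ℂ) / 2 - ((j : ℕ) : ℂ)) • v j) →
        -- linear independence on (0,1)
        ((∀ c : Fin (N + 1) → ℂ,
          (∀ y ∈ Set.Ioo (0:ℝ) 1, ∑ j : Fin (N + 1), c j • Fsol N (j : ℕ) (v j) y = 0) →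
          ∀ j, c j = 0)
        -- every solution is a linear combination of the `F_j`
        ∧ (∀ G : ℝ → (Fin (N + 1) → ℂ),
            (∀ (i : Fin (N + 1)), ∀ y ∈ Set.Ioo (0:ℝ) 1,
              DifferentiableAt ℝ (fun t => G t i) y) →
            (∀ y ∈ Set.Ioo (0:ℝ) 1,
              ((y : ℂ) * (1 - (y : ℂ))) • vderiv G y
                + (1 / 2 : ℂ) • ((Smat N
                    - ((N : ℂ) / 2) • (1 : Matrix (Fin (N + 1)) (Fin (N + 1)) ℂ)
                    + ((N : ℂ) * (y : ℂ)) • (1 : Matrix (Fin (N + 1)) (Fin (N + 1)) ℂ)).mulVec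
                      (G y))
                = 0) →
            ∃ c : Fin (N + 1) → ℂ,
              ∀ y ∈ Set.Ioo (0:ℝ) 1,
                G y = ∑ j : Fin (N + 1), c j • Fsol N (j : ℕ) (v j) y))) := by
  refine ⟨fun j hj v hv y hy => odeLHS_Fsol (Smat N) hj hv hy, fun v hv₀ hv => ⟨?_, ?_⟩⟩
  · exact fun c hc => eq_zero_of_sum_Fsol_eq_zero (linearIndependent_of_mulVec_eq_smul hv₀ hv) hc
  · intro G hG hode
    let b := basisOfLinearIndependentOfCardEqFinrank
      (linearIndependent_of_mulVec_eq_smul hv₀ hv) (by simp)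
    have hb : ∀ j, b j = v j := congrFun (coe_basisOfLinearIndependentOfCardEqFinrank _ _)
    refine ⟨fun j => b.repr (G (1 / 2)) j / solWeight N j (1 / 2), fun y hy => ?_⟩
    simpa only [hb] using
      eq_sum_Fsol_of_odeLHS_eq_zero b (fun j => by simpa only [hb] using hv j) hG hode y hy
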